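/- Let P = x^3·y + x^2·p2(y) + x·p1(y) + p0(y) and Q = x^2·y + x·q1(y) + q0(y) in K[x,y] with [P,Q] = x^4·y + μ0 + μ1·x + μ2·x^2 + μ3·x^3, and suppose p2'(0) = 0 (i.e. the coefficient a_{2,1} of P vanishes). Then q1'(0) = 0. -/

import Mathlib

/-!
Read off the coefficient of `x³y` on both sides of the bracket identity. On the right it is `0`.
On the left, `P_x Q_y` contributes `3 q₁'(0) + 2 p₂'(0)` and `P_y Q_x` contributes
`q₁'(0) + 2 p₂'(0)`, so it is `2 q₁'(0)`.
-/

open MvPolynomial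

/-- The Jacobian bracket on K[x,y]. -/
noncomputable def jbr {K : Type*} [CommRing K] (P Q : MvPolynomial (Fin 2) K) :
    MvPolynomial (Fin 2) K :=
  pderiv 0 P * pderiv 1 Q - pderiv 1 P * pderiv 0 Q

/-- Embedding of K[y] into K[x,y]. -/
noncomputable def py {K : Type*} [CommRing K] (p : Polynomial K) : MvPolynomial (Fin 2) K :=
  Polynomial.aeval (MvPolynomial.X 1) p

open DualNumber TrivSqZeroExt

namespace TrivSqZeroExt

@[simp] lemma fst_ofNat {R M : Type*} [AddMonoidWithOne R] [AddMonoid M] (n : ℕ) [n.AtLeastTwo] :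
    (ofNat(n) : TrivSqZeroExt R M).fst = ofNat(n) :=
  fst_natCast n

@[simp] lemma snd_ofNat {R M : Type*} [AddMonoidWithOne R] [AddMonoid M] (n : ℕ) [n.AtLeastTwo] :
    (ofNat(n) : TrivSqZeroExt R M).snd = 0 :=
  snd_natCast n

end TrivSqZeroExt

section

variable {R : Type*} [CommSemiring R]

/-- The `ε`-part of `linearInY r` is `∂r/∂y (X, 0)`, so its `X³`-coefficient is the
`x³y`-coefficient of `r`. -/
noncomputable def linearInY : MvPolynomial (Fin 2) R →ₐ[R] DualNumber (Polynomial R) :=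
  aeval ![inl Polynomial.X, ε]

@[simp] lemma linearInY_X_zero : linearInY (X 0 : MvPolynomial (Fin 2) R) = inl Polynomial.X := by
  simp [linearInY]

@[simp] lemma linearInY_X_one : linearInY (X 1 : MvPolynomial (Fin 2) R) = ε := by
  simp [linearInY]

end

section

variable {R : Type*} [CommRing R]

@[simp] lemma pderiv_zero_py (p : Polynomial R) : pderiv 0 (py p) = 0 := by
  simp [py, pderiv_X]

@[simp] lemma pderiv_one_py (p : Polynomial R) :
    pderiv 1 (py p) = py (Polynomial.derivative p) := by
  simp [py, pderiv_X]

@[simp] lemma linearInY_py (p : Polynomial R) :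
    linearInY (py p) =
      inl (Polynomial.C (p.eval 0)) + inr (Polynomial.C (p.derivative.eval 0)) := by
  have taylor := Polynomial.aeval_add_of_sq_eq_zero p 0 (ε : DualNumber (Polynomial R)) eps_pow_two
  rw [zero_add] at taylor
  rw [py, ← Polynomial.aeval_algHom_apply, linearInY_X_one, taylor,
    ← Polynomial.coeff_zero_eq_aeval_zero', ← Polynomial.coeff_zero_eq_aeval_zero',
    Polynomial.coeff_zero_eq_eval_zero, Polynomial.coeff_zero_eq_eval_zero]
  ext <;> simp [algebraMap_eq_inl']

lemma coeff_snd_linearInY_jbr (p0 p1 p2 q0 q1 : Polynomial R) :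
    (linearInY (jbr (X 0 ^ 3 * X 1 + X 0 ^ 2 * py p2 + X 0 * py p1 + py p0)
      (X 0 ^ 2 * X 1 + X 0 * py q1 + py q0))).snd.coeff 3 = 2 * q1.derivative.eval 0 := by
  simp only [jbr, map_add, map_sub, map_mul, map_pow, map_ofNat, Derivation.leibniz,
    Derivation.leibniz_pow, pderiv_X, Pi.single_eq_same, Pi.single_eq_of_ne, ne_eq, one_ne_zero,
    zero_ne_one, not_false_eq_true, smul_eq_mul, nsmul_eq_mul, Nat.cast_ofNat, Nat.add_one_sub_one,
    pow_one, mul_zero, mul_one, zero_mul, one_mul, zero_add, add_zero, pderiv_zero_py, pderiv_one_py,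
    linearInY_X_zero, linearInY_X_one, linearInY_py, inl_pow, inr_eq_smul_eps, DualNumber.snd_mul,
    snd_add, snd_sub, snd_inl, snd_smul, snd_eps, snd_ofNat, fst_add, fst_mul, fst_inl, fst_smul,
    fst_eps, fst_ofNat]
  ring_nf
  simp only [Polynomial.coeff_add, Polynomial.coeff_sub, Polynomial.coeff_C_mul,
    Polynomial.coeff_mul_C, Polynomial.coeff_mul_ofNat, Polynomial.coeff_X, Polynomial.coeff_X_pow,
    Polynomial.coeff_C]
  norm_num

end

theorem stmt10_general {K : Type*} [Field K] [CharZero K]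
    (p0 p1 p2 q0 q1 : Polynomial K) (μ0 μ1 μ2 μ3 : K)
    (P Q : MvPolynomial (Fin 2) K)
    (hP : P = X 0 ^ 3 * X 1 + X 0 ^ 2 * py p2 + X 0 * py p1 + py p0)
    (hQ : Q = X 0 ^ 2 * X 1 + X 0 * py q1 + py q0)
    (hbr : jbr P Q = X 0 ^ 4 * X 1 + C μ0 + C μ1 * X 0 + C μ2 * X 0 ^ 2 + C μ3 * X 0 ^ 3) :
    (Polynomial.derivative q1).eval 0 = 0 := by
  subst hP hQ
  have hcoeff := congrArg (fun r => (linearInY r).snd.coeff 3) hbr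
  have rhs : (linearInY (X 0 ^ 4 * X 1 + C μ0 + C μ1 * X 0 + C μ2 * X 0 ^ 2 + C μ3 * X 0 ^ 3 :
      MvPolynomial (Fin 2) K)).snd.coeff 3 = 0 := by
    simp [Polynomial.coeff_X_pow, algebraMap_eq_inl']
  rw [coeff_snd_linearInY_jbr, rhs] at hcoeff
  exact (mul_eq_zero.mp hcoeff).resolve_left two_ne_zero

theorem stmt10 {K : Type*} [Field K] [CharZero K]
    (p0 p1 p2 q0 q1 : Polynomial K) (μ0 μ1 μ2 μ3 : K)
    (P Q : MvPolynomial (Fin 2) K)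
    (hP : P = X 0 ^ 3 * X 1 + X 0 ^ 2 * py p2 + X 0 * py p1 + py p0)
    (hQ : Q = X 0 ^ 2 * X 1 + X 0 * py q1 + py q0)
    (hbr : jbr P Q = X 0 ^ 4 * X 1 + C μ0 + C μ1 * X 0 + C μ2 * X 0 ^ 2 + C μ3 * X 0 ^ 3)
    (hp2 : (Polynomial.derivative p2).eval 0 = 0) :
    (Polynomial.derivative q1).eval 0 = 0 :=
  stmt10_general p0 p1 p2 q0 q1 μ0 μ1 μ2 μ3 P Q hP hQ hbr
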